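/- Let A, B : ℝ → matrix-valued functions with A(t) ∈ ℝ^{n×n} and B(t) ∈ ℝ^{n×p} continuous on [t₀, T_f], and let Φ : ℝ × ℝ → ℝ^{n×n} be a transition matrix for A, i.e. for every τ the map t ↦ Φ(t,τ) is differentiable with ∂ₜΦ(t,τ) = A(t)·Φ(t,τ) and Φ(τ,τ) = I, and (t,τ) ↦ Φ(t,τ) and (t,τ) ↦ ∂ₜΦ(t,τ) are continuous on [t₀,T_f]². Then the controllability Gramian P(t) = ∫_{t₀}^t Φ(t,τ) B(τ) B(τ)ᵀ Φ(t,τ)ᵀ dτ is differentiable on [t₀,T_f] and satisfies the differential Lyapunov equation Ṗ(t) = A(t) P(t) + P(t) A(t)ᵀ + B(t) B(t)ᵀ with P(t₀) = 0. -/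

import Mathlib

/-!
Leibniz's rule for the integral `∫_{t₀}^x F(x, τ) dτ` with variable upper limit: its derivative is
`∫_{t₀}^x ∂ₓF(x, τ) dτ + F(x, x)`. For the Gramian, `F(x, τ) = Φ(x, τ) B(τ) B(τ)ᵀ Φ(x, τ)ᵀ`, so
`∂ₓF = A F + F Aᵀ` and `F(x, x) = B(x) B(x)ᵀ`; pulling the constant factors `A(x)`, `A(x)ᵀ` out of
the integral gives the Lyapunov equation. Since only derivatives within `[t₀, T_f]` are available,
the rule is proved directly: the mean value inequality and uniform continuity of `∂ₓF` on the
compact square `[t₀, T_f]²` control the variation of the integrand, and continuity of `F` at the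
diagonal point `(x, x)` controls the moving upper limit.
-/

open Matrix Set intervalIntegral

attribute [local instance] Matrix.normedAddCommGroup Matrix.normedSpace

open MeasureTheory Function
open scoped Interval

section MatrixCalculus

variable {l m n : Type*}

theorem ContinuousOn.matrix_mul [Fintype m] {X R : Type*} [TopologicalSpace X] [TopologicalSpace R]
    [Mul R] [AddCommMonoid R] [ContinuousAdd R] [ContinuousMul R]
    {f : X → Matrix l m R} {g : X → Matrix m n R} {s : Set X}
    (hf : ContinuousOn f s) (hg : ContinuousOn g s) : ContinuousOn (fun x => f x * g x) s := by
  rw [continuousOn_iff_continuous_domRestrict] at *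
  exact hf.matrix_mul hg

theorem ContinuousOn.matrix_transpose {X R : Type*} [TopologicalSpace X] [TopologicalSpace R]
    {f : X → Matrix m n R} {s : Set X} (hf : ContinuousOn f s) :
    ContinuousOn (fun x => (f x)ᵀ) s := by
  rw [continuousOn_iff_continuous_domRestrict] at *
  exact hf.matrix_transpose

variable [Fintype l] [Fintype m] [Fintype n]
variable {𝕜 : Type*} [NontriviallyNormedField 𝕜] [CompleteSpace 𝕜] {s : Set 𝕜} {x : 𝕜}

theorem HasDerivWithinAt.matrix_mul {f : 𝕜 → Matrix l m 𝕜} {g : 𝕜 → Matrix m n 𝕜}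
    {f' : Matrix l m 𝕜} {g' : Matrix m n 𝕜}
    (hf : HasDerivWithinAt f f' s x) (hg : HasDerivWithinAt g g' s x) :
    HasDerivWithinAt (fun y => f y * g y) (f' * g x + f x * g') s x := by
  rw [add_comm]
  exact (mulLinearMap 𝕜).toContinuousBilinearMap.hasDerivWithinAt_of_bilinear hf hg

theorem HasDerivWithinAt.matrix_transpose {f : 𝕜 → Matrix m n 𝕜} {f' : Matrix m n 𝕜}
    (hf : HasDerivWithinAt f f' s x) : HasDerivWithinAt (fun y => (f y)ᵀ) f'ᵀ s x :=
  (LinearMap.toContinuousLinearMap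
    (Matrix.transposeLinearEquiv m n 𝕜 𝕜).toLinearMap).hasFDerivAt.comp_hasDerivWithinAt x hf

theorem HasDerivWithinAt.matrix_mul_mul_transpose {f : 𝕜 → Matrix n n 𝕜} {A : Matrix n n 𝕜}
    (M : Matrix n n 𝕜) (hf : HasDerivWithinAt f (A * f x) s x) :
    HasDerivWithinAt (fun y => f y * M * (f y)ᵀ)
      (A * (f x * M * (f x)ᵀ) + f x * M * (f x)ᵀ * Aᵀ) s x := by
  convert ((hf.matrix_mul (hasDerivWithinAt_const x s M)).matrix_mul hf.matrix_transpose)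
    using 1
  simp only [Matrix.transpose_mul, Matrix.mul_zero, add_zero, Matrix.mul_assoc]

theorem Matrix.intervalIntegral_const_mul_add_mul_const {𝕜 : Type*} [RCLike 𝕜]
    {f : ℝ → Matrix m n 𝕜} {a b : ℝ} (M : Matrix m m 𝕜) (N : Matrix n n 𝕜) (hf : ContinuousOn f (uIcc a b)) :
    ∫ τ in a..b, (M * f τ + f τ * N) = M * (∫ τ in a..b, f τ) + (∫ τ in a..b, f τ) * N :=
  LinearMap.toContinuousLinearMap (mulLeftLinearMap n 𝕜 M + mulRightLinearMap m 𝕜 N)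
    |>.intervalIntegral_comp_comm hf.intervalIntegrable

end MatrixCalculus

section Leibniz

variable {E : Type*} [NormedAddCommGroup E] [NormedSpace ℝ E]

theorem Convex.norm_image_sub_le_of_norm_hasDerivWithin_le' {f f' : ℝ → E} {s : Set ℝ}
    {x y : ℝ} {v : E} {C : ℝ} (hf : ∀ u ∈ s, HasDerivWithinAt f (f' u) s u)
    (bound : ∀ u ∈ s, ‖f' u - v‖ ≤ C) (hs : Convex ℝ s) (xs : x ∈ s) (ys : y ∈ s) :
    ‖f y - f x - (y - x) • v‖ ≤ C * ‖y - x‖ := by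
  have hg : ∀ u ∈ s, HasDerivWithinAt (fun w => f w - w • v) (f' u - v) s u := by
    intro u hu
    have := (hf u hu).sub ((hasDerivWithinAt_id u s).smul_const v)
    rwa [one_smul] at this
  convert hs.norm_image_sub_le_of_norm_hasDerivWithin_le hg bound xs ys using 2
  rw [sub_smul]
  abel

theorem intervalIntegral.hasDerivWithinAt_integral_param {F D : ℝ → ℝ → E} {s : Set ℝ}
    [s.OrdConnected] {a b t : ℝ} (hF : ∀ x ∈ s, IntervalIntegrable (F x) volume a b)
    (hFD : ∀ τ ∈ uIcc a b, ∀ x ∈ s, HasDerivWithinAt (F · τ) (D x τ) s x)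
    (hD : UniformContinuousOn (uncurry D) (s ×ˢ uIcc a b)) (ht : t ∈ s) :
    HasDerivWithinAt (fun x => ∫ τ in a..b, F x τ) (∫ τ in a..b, D t τ) s t := by
  rw [hasDerivWithinAt_iff_isLittleO, Asymptotics.isLittleO_iff]
  intro c hc
  set ε := c / (|b - a| + 1)
  obtain ⟨δ, hδ, hDδ⟩ := Metric.uniformContinuousOn_iff.1 hD ε (by positivity)
  filter_upwards [self_mem_nhdsWithin, mem_nhdsWithin_of_mem_nhds (Metric.ball_mem_nhds t hδ)]
    with x hx hxt
  have hsub : uIcc t x ⊆ s := Set.OrdConnected.uIcc_subset ‹_› ht hx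
  have hlin : ∀ τ ∈ Ι a b, ‖F x τ - F t τ - (x - t) • D t τ‖ ≤ ε * |x - t| := by
    intro τ hτ
    have hτ : τ ∈ uIcc a b := uIoc_subset_uIcc hτ
    refine (convex_uIcc t x).norm_image_sub_le_of_norm_hasDerivWithin_le'
      (fun u hu => (hFD τ hτ u (hsub hu)).mono hsub) (fun u hu => ?_) left_mem_uIcc right_mem_uIcc
    have hut : dist u t < δ := (abs_sub_left_of_mem_uIcc hu).trans_lt hxt
    rw [← dist_eq_norm]
    exact (hDδ (u, τ) ⟨hsub hu, hτ⟩ (t, τ) ⟨ht, hτ⟩ (by simpa [Prod.dist_eq] using hut)).le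
  have hFxt : IntervalIntegrable (fun τ => F x τ - F t τ) volume a b := (hF x hx).sub (hF t ht)
  have hDt : IntervalIntegrable (fun τ => (x - t) • D t τ) volume a b :=
    (hD.continuousOn.uncurry_left t ht).intervalIntegrable.smul (x - t)
  have hε : ε * |b - a| ≤ c := by
    rw [div_mul_eq_mul_div, div_le_iff₀ (by positivity)]
    nlinarith
  calc ‖(∫ τ in a..b, F x τ) - (∫ τ in a..b, F t τ) - (x - t) • ∫ τ in a..b, D t τ‖
      = ‖∫ τ in a..b, F x τ - F t τ - (x - t) • D t τ‖ := by
        rw [integral_sub hFxt hDt, integral_sub (hF x hx) (hF t ht), integral_smul]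
    _ ≤ ε * |x - t| * |b - a| := norm_integral_le_of_norm_le_const hlin
    _ ≤ c * ‖x - t‖ := by
        rw [Real.norm_eq_abs, mul_right_comm]
        exact mul_le_mul_of_nonneg_right hε (abs_nonneg _)

theorem intervalIntegral.hasDerivWithinAt_integral_param_upper_self [CompleteSpace E]
    {F : ℝ → ℝ → E} {s : Set ℝ} [s.OrdConnected] {t : ℝ}
    (hF : ContinuousOn (uncurry F) (s ×ˢ s)) (ht : t ∈ s) :
    HasDerivWithinAt (fun x => ∫ τ in t..x, F x τ) (F t t) s t := by
  rw [hasDerivWithinAt_iff_isLittleO, Asymptotics.isLittleO_iff]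
  intro c hc
  obtain ⟨δ, hδ, hFδ⟩ := Metric.continuousWithinAt_iff.1 (hF (t, t) ⟨ht, ht⟩) c hc
  filter_upwards [self_mem_nhdsWithin, mem_nhdsWithin_of_mem_nhds (Metric.ball_mem_nhds t hδ)]
    with x hx hxt
  have hsub : uIcc t x ⊆ s := Set.OrdConnected.uIcc_subset ‹_› ht hx
  have hnear : ∀ τ ∈ Ι t x, ‖F x τ - F t t‖ ≤ c := by
    intro τ hτ
    have hτ : τ ∈ uIcc t x := uIoc_subset_uIcc hτ
    have hτt : dist τ t < δ := (abs_sub_left_of_mem_uIcc hτ).trans_lt hxt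
    rw [← dist_eq_norm]
    exact (hFδ (x := (x, τ)) ⟨hx, hsub hτ⟩ (max_lt hxt hτt)).le
  have hFx : IntervalIntegrable (F x) volume t x :=
    ((hF.uncurry_left x hx).mono hsub).intervalIntegrable
  calc ‖(∫ τ in t..x, F x τ) - (∫ τ in t..t, F t τ) - (x - t) • F t t‖
      = ‖∫ τ in t..x, F x τ - F t t‖ := by
        rw [integral_same, sub_zero, integral_sub hFx intervalIntegrable_const, integral_const]
    _ ≤ c * ‖x - t‖ := norm_integral_le_of_norm_le_const hnear

theorem intervalIntegral.hasDerivWithinAt_integral_param_upper [CompleteSpace E]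
    {F D : ℝ → ℝ → E} {a b t₀ t : ℝ}
    (hF : ContinuousOn (uncurry F) (Icc a b ×ˢ Icc a b))
    (hD : ContinuousOn (uncurry D) (Icc a b ×ˢ Icc a b))
    (hFD : ∀ τ ∈ Icc a b, ∀ x ∈ Icc a b, HasDerivWithinAt (F · τ) (D x τ) (Icc a b) x)
    (ht₀ : t₀ ∈ Icc a b) (ht : t ∈ Icc a b) :
    HasDerivWithinAt (fun x => ∫ τ in t₀..x, F x τ) ((∫ τ in t₀..t, D t τ) + F t t)
      (Icc a b) t := by
  have hsub {x} (hx : x ∈ Icc a b) : uIcc t₀ x ⊆ Icc a b := ordConnected_Icc.uIcc_subset ht₀ hx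
  have hint {x y} (hx : x ∈ Icc a b) (hy : y ∈ Icc a b) : IntervalIntegrable (F x) volume t₀ y :=
    ((hF.uncurry_left x hx).mono (hsub hy)).intervalIntegrable
  have hDunif : UniformContinuousOn (uncurry D) (Icc a b ×ˢ uIcc t₀ t) :=
    ((isCompact_Icc.prod isCompact_Icc).uniformContinuousOn_of_continuous hD).mono
      (prod_mono subset_rfl (hsub ht))
  have hfixed := hasDerivWithinAt_integral_param (fun x hx => hint hx ht)
    (fun τ hτ => hFD τ (hsub ht hτ)) hDunif ht
  refine (hfixed.add (hasDerivWithinAt_integral_param_upper_self hF ht)).congr_of_mem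
    (fun x hx => ?_) ht
  exact (integral_add_adjacent_intervals (hint hx ht) ((hF.uncurry_left x hx).mono
    (ordConnected_Icc.uIcc_subset ht hx)).intervalIntegrable).symm

end Leibniz

theorem controllability_gramian_dle_general
    (n p : ℕ) (t₀ Tf : ℝ)
    (A : ℝ → Matrix (Fin n) (Fin n) ℝ)
    (B : ℝ → Matrix (Fin n) (Fin p) ℝ)
    (hA : ContinuousOn A (Icc t₀ Tf))
    (hB : ContinuousOn B (Icc t₀ Tf))
    (Φ : ℝ → ℝ → Matrix (Fin n) (Fin n) ℝ)
    (hΦderiv : ∀ τ ∈ Icc t₀ Tf, ∀ t ∈ Icc t₀ Tf,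
      HasDerivWithinAt (fun u => Φ u τ) (A t * Φ t τ) (Icc t₀ Tf) t)
    (hΦinit : ∀ τ, Φ τ τ = 1)
    (hΦcont : ContinuousOn (fun pr : ℝ × ℝ => Φ pr.1 pr.2) (Icc t₀ Tf ×ˢ Icc t₀ Tf))
    (P : ℝ → Matrix (Fin n) (Fin n) ℝ)
    (hP : ∀ t, P t = ∫ τ in t₀..t, Φ t τ * (B τ * (B τ)ᵀ) * (Φ t τ)ᵀ) :
    P t₀ = 0 ∧
      ∀ t ∈ Icc t₀ Tf,
        HasDerivWithinAt P (A t * P t + P t * (A t)ᵀ + B t * (B t)ᵀ) (Icc t₀ Tf) t := by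
  set F := fun x τ => Φ x τ * (B τ * (B τ)ᵀ) * (Φ x τ)ᵀ
  have hF : ContinuousOn (uncurry F) (Icc t₀ Tf ×ˢ Icc t₀ Tf) :=
    (hΦcont.matrix_mul ((hB.matrix_mul hB.matrix_transpose).comp continuousOn_snd
      fun _ h => h.2)).matrix_mul hΦcont.matrix_transpose
  have hAfst : ContinuousOn (fun pr : ℝ × ℝ => A pr.1) (Icc t₀ Tf ×ˢ Icc t₀ Tf) :=
    hA.comp continuousOn_fst fun _ h => h.1
  have hD : ContinuousOn (uncurry fun x τ => A x * F x τ + F x τ * (A x)ᵀ)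
      (Icc t₀ Tf ×ˢ Icc t₀ Tf) :=
    (hAfst.matrix_mul hF).add (hF.matrix_mul hAfst.matrix_transpose)
  refine ⟨by rw [hP, integral_same], fun t ht => ?_⟩
  have ht₀ : t₀ ∈ Icc t₀ Tf := left_mem_Icc.2 (ht.1.trans ht.2)
  have hleibniz := hasDerivWithinAt_integral_param_upper hF hD
    (fun τ hτ x hx => (hΦderiv τ hτ x hx).matrix_mul_mul_transpose _) ht₀ ht
  have hslice : ContinuousOn (F t) (uIcc t₀ t) :=
    (hF.uncurry_left t ht).mono (ordConnected_Icc.uIcc_subset ht₀ ht)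
  have hdiag : F t t = B t * (B t)ᵀ := by simp [F, hΦinit]
  rw [intervalIntegral_const_mul_add_mul_const _ _ hslice, ← hP, hdiag] at hleibniz
  exact hleibniz.congr_of_mem (fun x _ => hP x) ht

/-- If `Φ` is a transition matrix for the time-dependent coefficient
`A : ℝ → ℝ^{n×n}` and `B : ℝ → ℝ^{n×p}` is continuous, then the controllability Gramian
`P t = ∫_{t₀}^t Φ t τ * B τ * (B τ)ᵀ * (Φ t τ)ᵀ dτ` solves the differential Lyapunov equation
`Ṗ = A P + P Aᵀ + B Bᵀ`, `P t₀ = 0`, on `[t₀, T_f]`. -/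
theorem controllability_gramian_dle
    (n p : ℕ) (hn : 0 < n) (hp : 0 < p) (t₀ Tf : ℝ) (ht : t₀ ≤ Tf)
    (A : ℝ → Matrix (Fin n) (Fin n) ℝ)
    (B : ℝ → Matrix (Fin n) (Fin p) ℝ)
    (hA : ContinuousOn A (Icc t₀ Tf))
    (hB : ContinuousOn B (Icc t₀ Tf))
    (Φ : ℝ → ℝ → Matrix (Fin n) (Fin n) ℝ)
    (hΦderiv : ∀ τ ∈ Icc t₀ Tf, ∀ t ∈ Icc t₀ Tf,
      HasDerivWithinAt (fun u => Φ u τ) (A t * Φ t τ) (Icc t₀ Tf) t)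
    (hΦinit : ∀ τ, Φ τ τ = 1)
    (hΦcont : ContinuousOn (fun pr : ℝ × ℝ => Φ pr.1 pr.2) (Icc t₀ Tf ×ˢ Icc t₀ Tf))
    (hΦ'cont : ContinuousOn (fun pr : ℝ × ℝ => A pr.1 * Φ pr.1 pr.2) (Icc t₀ Tf ×ˢ Icc t₀ Tf))
    (P : ℝ → Matrix (Fin n) (Fin n) ℝ)
    (hP : ∀ t, P t = ∫ τ in t₀..t, Φ t τ * (B τ * (B τ)ᵀ) * (Φ t τ)ᵀ) :
    P t₀ = 0 ∧
      ∀ t ∈ Icc t₀ Tf,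
        HasDerivWithinAt P (A t * P t + P t * (A t)ᵀ + B t * (B t)ᵀ) (Icc t₀ Tf) t :=
  controllability_gramian_dle_general n p t₀ Tf A B hA hB Φ hΦderiv hΦinit hΦcont P hP
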